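/- Let n ≥ 3, let γ : ℝⁿ → ℝ be smooth with γ(x) ≥ c for some constant c > 0 and with γ − 1 compactly supported, and set q := Δ(γ^{1/2})/γ^{1/2}. If f : ℝⁿ → ℝ is smooth, compactly supported, and satisfies Δf(x) − 3 q(x) f(x) = 0 for every x ∈ ℝⁿ, then f = 0 identically. -/

import Mathlib

open scoped BigOperators

noncomputable section

/-- Partial derivative in the j-th coordinate direction. -/
noncomputable def pd {n : ℕ} {E : Type*} [NormedAddCommGroup E] [NormedSpace ℝ E]
    (j : Fin n) (f : (Fin n → ℝ) → E) (x : Fin n → ℝ) : E :=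
  fderiv ℝ f x (Pi.single j 1)

/-- Laplacian: sum of second partial derivatives. -/
noncomputable def lap {n : ℕ} {E : Type*} [NormedAddCommGroup E] [NormedSpace ℝ E]
    (f : (Fin n → ℝ) → E) (x : Fin n → ℝ) : E :=
  ∑ j, pd j (fun y => pd j f y) x

/-!
Since `γ ≥ c > 0` is smooth, `q = Δ(γ^{1/2}) / γ^{1/2}` is continuous, so it suffices to show
that a smooth compactly supported solution of `Δf = V f` with `V` continuous vanishes. This
follows from a Carleman estimate with the convex weight `φ(x) = (xᵢ + R)² / 2`: writing
`v = e^{τφ} f`, the function `e^{τφ} Δf` is `S v + A v` with `S` symmetric and `A` antisymmetric,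
and integrating the cross term by parts gives
`∫ (e^{τφ} Δf)² ≥ 2 ∫ S v · A v ≥ 4 τ³ ∫ (∂ᵢφ · v)²`.
Choose `R` with `∂ᵢφ ≥ 1` on the support of `f` and `τ` with `4 τ³ > sup |V|²`; then
`∫ (e^{τφ} Δf)² = ∫ (V v)² ≤ sup |V|² ∫ (∂ᵢφ · v)²` forces `v = 0`.
-/

open MeasureTheory
open scoped ContDiff

variable {n : ℕ}

@[fun_prop]
theorem contDiff_pd {f : (Fin n → ℝ) → ℝ} (hf : ContDiff ℝ ∞ f) (j : Fin n) :
    ContDiff ℝ ∞ (fun x => pd j f x) :=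
  (hf.fderiv_right le_rfl).clm_apply contDiff_const

@[fun_prop]
theorem contDiff_lap {f : (Fin n → ℝ) → ℝ} (hf : ContDiff ℝ ∞ f) :
    ContDiff ℝ ∞ (fun x => lap f x) :=
  ContDiff.sum fun j _ => contDiff_pd (contDiff_pd hf j) j

@[fun_prop]
theorem differentiable_pd {f : (Fin n → ℝ) → ℝ} (hf : ContDiff ℝ ∞ f) (j : Fin n) :
    Differentiable ℝ (fun x => pd j f x) :=
  (contDiff_pd hf j).differentiable (by simp)

theorem HasCompactSupport.pd {f : (Fin n → ℝ) → ℝ} (hf : HasCompactSupport f) (j : Fin n) :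
    HasCompactSupport (pd j f) :=
  hf.fderiv_apply ℝ (Pi.single j 1)

theorem HasCompactSupport.lap {f : (Fin n → ℝ) → ℝ} (hf : HasCompactSupport f) :
    HasCompactSupport (lap f) := by
  have : _root_.lap f = ∑ j, _root_.pd j (_root_.pd j f) := by ext; simp [_root_.lap]
  rw [this]
  exact Finset.sum_induction _ HasCompactSupport (fun _ _ => .add) .zero
    fun j _ => (hf.pd j).pd j

theorem pd_add {g h : (Fin n → ℝ) → ℝ} {x : Fin n → ℝ} (hg : DifferentiableAt ℝ g x)
    (hh : DifferentiableAt ℝ h x) (j : Fin n) :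
    pd j (fun y => g y + h y) x = pd j g x + pd j h x := by
  simp [pd, fderiv_fun_add hg hh]

theorem pd_mul {g h : (Fin n → ℝ) → ℝ} {x : Fin n → ℝ} (hg : DifferentiableAt ℝ g x)
    (hh : DifferentiableAt ℝ h x) (j : Fin n) :
    pd j (fun y => g y * h y) x = pd j g x * h x + g x * pd j h x := by
  simp [pd, fderiv_fun_mul hg hh]
  ring

theorem pd_comp_apply {g : ℝ → ℝ} {x : Fin n → ℝ} {i : Fin n} (hg : DifferentiableAt ℝ g (x i))
    (j : Fin n) : pd j (fun y => g (y i)) x = if i = j then deriv g (x i) else 0 := by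
  have : HasFDerivAt (fun y : Fin n → ℝ => g (y i)) (deriv g (x i) • .proj i) x :=
    hg.hasDerivAt.comp_hasFDerivAt x (hasFDerivAt_apply (𝕜 := ℝ) i x)
  simp [pd, this.fderiv, Pi.single_apply]

theorem lap_comp_apply {g : ℝ → ℝ} (hg : ContDiff ℝ 2 g) (i : Fin n) (x : Fin n → ℝ) :
    lap (fun y => g (y i)) x = deriv (deriv g) (x i) := by
  have hj : ∀ j, pd j (pd j (fun y => g (y i))) x
      = if i = j then deriv (deriv g) (x i) else 0 := by
    intro j
    have : pd j (fun y => g (y i)) = fun y => if i = j then deriv g (y i) else 0 :=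
      funext fun y => pd_comp_apply (hg.differentiable (by simp) _) j
    rw [this]
    split_ifs with h
    · exact pd_comp_apply (hg.differentiable_deriv_two _) j |>.trans (if_pos h)
    · simp [pd]
  simp [lap, hj]

theorem pd_comm {f : (Fin n → ℝ) → ℝ} (hf : ContDiff ℝ 2 f) (i j : Fin n)
    (x : Fin n → ℝ) : pd i (pd j f) x = pd j (pd i f) x := by
  have hf' : Differentiable ℝ (fderiv ℝ f) :=
    (hf.fderiv_right (m := 1) le_rfl).differentiable one_ne_zero
  have key : ∀ k l, pd k (pd l f) x
      = fderiv ℝ (fderiv ℝ f) x (Pi.single k 1) (Pi.single l 1) := by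
    intro k l
    change fderiv ℝ (fun y => fderiv ℝ f y (Pi.single l 1)) x (Pi.single k 1) = _
    simp [fderiv_clm_apply (hf' x) (differentiableAt_const _)]
  rw [key, key, (hf.contDiffAt.isSymmSndFDerivAt (by simp)).eq]

theorem lap_mul {g h : (Fin n → ℝ) → ℝ} (hg : ContDiff ℝ ∞ g) (hh : ContDiff ℝ ∞ h)
    (x : Fin n → ℝ) :
    lap (fun y => g y * h y) x
      = lap g x * h x + 2 * ∑ j, pd j g x * pd j h x + g x * lap h x := by
  have hj : ∀ j, pd j (pd j (fun y => g y * h y)) x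
      = pd j (pd j g) x * h x + 2 * (pd j g x * pd j h x) + g x * pd j (pd j h) x := by
    intro j
    have dg : Differentiable ℝ g := hg.differentiable (by simp)
    have dh : Differentiable ℝ h := hh.differentiable (by simp)
    have : pd j (fun y => g y * h y) = fun y => pd j g y * h y + g y * pd j h y :=
      funext fun y => pd_mul (dg y) (dh y) j
    rw [this, pd_add (by fun_prop) (by fun_prop), pd_mul (by fun_prop) (by fun_prop),
      pd_mul (by fun_prop) (by fun_prop)]
    ring
  simp only [lap, hj, Finset.sum_add_distrib, Finset.sum_mul, Finset.mul_sum]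

theorem HasCompactSupport.pow {α M : Type*} [TopologicalSpace α] [MonoidWithZero M] {u : α → M}
    (hu : HasCompactSupport u) {k : ℕ} (hk : k ≠ 0) : HasCompactSupport (fun x => u x ^ k) :=
  hu.comp_left (zero_pow hk)

section IntegrationByParts

variable {F G g u v : (Fin n → ℝ) → ℝ}

theorem integral_mul_pd (hF : ContDiff ℝ ∞ F) (hG : ContDiff ℝ ∞ G) (hFc : HasCompactSupport F)
    (j : Fin n) : ∫ x, F x * pd j G x = -∫ x, pd j F x * G x :=
  integral_mul_fderiv_eq_neg_fderiv_mul_of_integrable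
    ((by fun_prop : Continuous fun x => pd j F x * G x).integrable_of_hasCompactSupport
      (hFc.pd j).mul_right)
    ((by fun_prop : Continuous fun x => F x * pd j G x).integrable_of_hasCompactSupport
      hFc.mul_right)
    ((by fun_prop : Continuous fun x => F x * G x).integrable_of_hasCompactSupport hFc.mul_right)
    (fun x _ => hF.differentiable (by simp) x) (fun x _ => hG.differentiable (by simp) x)

theorem integral_mul_lap_self (hv : ContDiff ℝ ∞ v) (hvc : HasCompactSupport v) :
    ∫ x, v x * lap v x = -∑ j, ∫ x, pd j v x ^ 2 := by
  simp only [lap, Finset.mul_sum]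
  rw [integral_finsetSum _ fun j _ => (by fun_prop : Continuous fun x => v x * pd j (pd j v) x)
    |>.integrable_of_hasCompactSupport hvc.mul_right]
  simp only [← Finset.sum_neg_distrib, integral_mul_pd hv (contDiff_pd hv _) hvc, sq]

theorem integral_mul_mul_pd_self (hg : ContDiff ℝ ∞ g) (hu : ContDiff ℝ ∞ u)
    (huc : HasCompactSupport u) (j : Fin n) :
    ∫ x, g x * u x * pd j u x = -(1 / 2) * ∫ x, pd j g x * u x ^ 2 := by
  have hibp := integral_mul_pd (hg.mul hu) hu huc.mul_left j
  have hpd : ∀ x, pd j (fun y => g y * u y) x * u x = pd j g x * u x ^ 2 + g x * u x * pd j u x :=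
    fun x => by
      rw [pd_mul (hg.differentiable (by simp) x) (hu.differentiable (by simp) x)]
      ring
  simp only [hpd] at hibp
  rw [integral_add ((by fun_prop : Continuous fun x => pd j g x * u x ^ 2)
      |>.integrable_of_hasCompactSupport (huc.pow two_ne_zero).mul_left)
    ((by fun_prop : Continuous fun x => g x * u x * pd j u x)
      |>.integrable_of_hasCompactSupport huc.mul_left.mul_right)] at hibp
  linarith

end IntegrationByParts

def carlemanWeight (R τ t : ℝ) : ℝ := Real.exp (τ * (t + R) ^ 2 / 2)

section CarlemanWeight

variable (R τ : ℝ)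

theorem contDiff_carlemanWeight : ContDiff ℝ ∞ (carlemanWeight R τ) := by
  unfold carlemanWeight
  fun_prop

theorem hasDerivAt_carlemanWeight (t : ℝ) :
    HasDerivAt (carlemanWeight R τ) (τ * (t + R) * carlemanWeight R τ t) t := by
  refine (((((hasDerivAt_id' t).add_const R).fun_pow 2).const_mul τ).div_const 2).exp
    |>.congr_deriv ?_
  simp only [carlemanWeight]
  ring

theorem deriv_carlemanWeight :
    deriv (carlemanWeight R τ) = fun t => τ * (t + R) * carlemanWeight R τ t :=
  funext fun t => (hasDerivAt_carlemanWeight R τ t).deriv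

theorem deriv_deriv_carlemanWeight (t : ℝ) :
    deriv (deriv (carlemanWeight R τ)) t = (τ + τ ^ 2 * (t + R) ^ 2) * carlemanWeight R τ t := by
  rw [deriv_carlemanWeight]
  refine ((((hasDerivAt_id' t).add_const R).const_mul τ).fun_mul
    (hasDerivAt_carlemanWeight R τ t)).deriv.trans ?_
  ring

end CarlemanWeight

section CommutatorIntegrals

variable {v : (Fin n → ℝ) → ℝ} (i : Fin n) (R : ℝ)

theorem pd_coord_add_const_pow (k : ℕ) (j : Fin n) (x : Fin n → ℝ) :
    pd j (fun y => (y i + R) ^ k) x = if i = j then k * (x i + R) ^ (k - 1) else 0 := by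
  rw [pd_comp_apply (g := fun t => (t + R) ^ k) (by fun_prop)]
  simp

theorem pd_coord_add_const (j : Fin n) (x : Fin n → ℝ) :
    pd j (fun y => y i + R) x = if i = j then 1 else 0 := by
  simpa using pd_coord_add_const_pow i R 1 j x

theorem integral_coord_mul_pd_mul_pd_pd (hv : ContDiff ℝ ∞ v) (hvc : HasCompactSupport v)
    (j : Fin n) :
    ∫ x, (x i + R) * pd i v x * pd j (pd j v) x
      = -(if i = j then ∫ x, pd i v x ^ 2 else 0) + 1 / 2 * ∫ x, pd j v x ^ 2 := by
  have hibp := integral_mul_pd (F := fun x => (x i + R) * pd i v x) (by fun_prop)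
    (contDiff_pd hv j) (hvc.pd i).mul_left j
  have hpd : ∀ x, pd j (fun y => (y i + R) * pd i v y) x * pd j v x
      = (if i = j then 1 else 0) * (pd i v x * pd j v x)
        + (x i + R) * pd j v x * pd i (pd j v) x := fun x => by
    rw [pd_mul (by fun_prop) (differentiable_pd hv i x), pd_comm (hv.of_le ENat.LEInfty.out) j i]
    split_ifs with h <;> simp [pd_coord_add_const, h] <;> ring
  have hsq := integral_mul_mul_pd_self (g := fun y => y i + R) (by fun_prop) (contDiff_pd hv j)
    (hvc.pd j) i
  simp only [pd_coord_add_const, if_true, one_mul] at hsq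
  simp only [hpd] at hibp
  rw [integral_add ((by fun_prop : Continuous fun x => pd i v x * pd j v x).const_mul _
      |>.integrable_of_hasCompactSupport (hvc.pd j).mul_left.mul_left)
    ((by fun_prop : Continuous fun x => (x i + R) * pd j v x * pd i (pd j v) x)
      |>.integrable_of_hasCompactSupport (hvc.pd j).mul_left.mul_right),
    integral_const_mul, hsq] at hibp
  split_ifs at hibp ⊢ with h
  · subst h
    simp only [sq]
    linarith
  · linarith

theorem integral_coord_mul_pd_mul_lap (hv : ContDiff ℝ ∞ v) (hvc : HasCompactSupport v) :
    ∫ x, (x i + R) * pd i v x * lap v x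
      = -(∫ x, pd i v x ^ 2) + 1 / 2 * ∑ j, ∫ x, pd j v x ^ 2 := by
  simp only [lap, Finset.mul_sum]
  rw [integral_finsetSum _ fun j _ =>
    (by fun_prop : Continuous fun x => (x i + R) * pd i v x * pd j (pd j v) x)
      |>.integrable_of_hasCompactSupport (hvc.pd i).mul_left.mul_right]
  simp [integral_coord_mul_pd_mul_pd_pd i R hv hvc, Finset.sum_add_distrib]

theorem integral_coord_pow_three_mul_mul_pd (hv : ContDiff ℝ ∞ v) (hvc : HasCompactSupport v) :
    ∫ x, (x i + R) ^ 3 * v x * pd i v x = -(3 / 2) * ∫ x, ((x i + R) * v x) ^ 2 := by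
  have h3 : ∀ x, pd i (fun y => (y i + R) ^ 3) x * v x ^ 2 = 3 * ((x i + R) * v x) ^ 2 :=
    fun x => by simp [pd_coord_add_const_pow]; ring
  rw [integral_mul_mul_pd_self (by fun_prop) hv hvc, funext h3, integral_const_mul]
  ring

end CommutatorIntegrals

-- For `φ x = (x i + R) ^ 2 / 2` (so `∇φ = (x i + R) eᵢ` and `Δφ = 1`), the conjugated
-- Laplacian `e^{τφ} ∘ Δ ∘ e^{-τφ}` is `carlemanSym + carlemanAntisym`, a symmetric plus an
-- antisymmetric operator.
def carlemanSym (i : Fin n) (R τ : ℝ) (v : (Fin n → ℝ) → ℝ) (x : Fin n → ℝ) : ℝ :=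
  lap v x + τ ^ 2 * (x i + R) ^ 2 * v x

def carlemanAntisym (i : Fin n) (R τ : ℝ) (v : (Fin n → ℝ) → ℝ) (x : Fin n → ℝ) : ℝ :=
  -τ * (2 * (x i + R) * pd i v x + v x)

section Carleman

variable {f v : (Fin n → ℝ) → ℝ} (i : Fin n) (R τ : ℝ)

theorem integral_carlemanSym_mul_carlemanAntisym (hv : ContDiff ℝ ∞ v)
    (hvc : HasCompactSupport v) :
    ∫ x, carlemanSym i R τ v x * carlemanAntisym i R τ v x
      = 2 * τ * (∫ x, pd i v x ^ 2) + 2 * τ ^ 3 * ∫ x, ((x i + R) * v x) ^ 2 := by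
  have expand : ∀ x, carlemanSym i R τ v x * carlemanAntisym i R τ v x
      = -2 * τ * ((x i + R) * pd i v x * lap v x) + -τ * (v x * lap v x)
        + -2 * τ ^ 3 * ((x i + R) ^ 3 * v x * pd i v x) + -τ ^ 3 * ((x i + R) * v x) ^ 2 :=
    fun x => by simp only [carlemanSym, carlemanAntisym]; ring
  have I₁ := (by fun_prop : Continuous fun x => -2 * τ * ((x i + R) * pd i v x * lap v x))
    |>.integrable_of_hasCompactSupport (μ := volume) (hvc.lap.mul_left.mul_left)
  have I₂ := (by fun_prop : Continuous fun x => -τ * (v x * lap v x))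
    |>.integrable_of_hasCompactSupport (μ := volume) (hvc.mul_right.mul_left)
  have I₃ := (by fun_prop : Continuous fun x => -2 * τ ^ 3 * ((x i + R) ^ 3 * v x * pd i v x))
    |>.integrable_of_hasCompactSupport (μ := volume) (hvc.mul_left.mul_right.mul_left)
  have I₄ := (by fun_prop : Continuous fun x => -τ ^ 3 * ((x i + R) * v x) ^ 2)
    |>.integrable_of_hasCompactSupport (μ := volume) ((hvc.mul_left.pow two_ne_zero).mul_left)
  rw [funext expand, integral_add ((I₁.fun_add I₂).fun_add I₃) I₄,
    integral_add (I₁.fun_add I₂) I₃, integral_add I₁ I₂]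
  simp only [integral_const_mul, integral_coord_mul_pd_mul_lap i R hv hvc,
    integral_mul_lap_self hv hvc, integral_coord_pow_three_mul_mul_pd i R hv hvc]
  ring

theorem carlemanWeight_mul_lap (hf : ContDiff ℝ ∞ f) (x : Fin n → ℝ) :
    carlemanWeight R τ (x i) * lap f x
      = carlemanSym i R τ (fun y => carlemanWeight R τ (y i) * f y) x
        + carlemanAntisym i R τ (fun y => carlemanWeight R τ (y i) * f y) x := by
  have hw := contDiff_carlemanWeight R τ
  have dw : Differentiable ℝ (carlemanWeight R τ) := hw.differentiable (by simp)
  have pd_w : ∀ j y, pd j (fun y => carlemanWeight R τ (y i)) y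
      = if i = j then τ * (y i + R) * carlemanWeight R τ (y i) else 0 := fun j y => by
    rw [pd_comp_apply (dw _), deriv_carlemanWeight]
  have lap_w : lap (fun y => carlemanWeight R τ (y i)) x
      = (τ + τ ^ 2 * (x i + R) ^ 2) * carlemanWeight R τ (x i) := by
    rw [lap_comp_apply (hw.of_le ENat.LEInfty.out), deriv_deriv_carlemanWeight]
  simp only [carlemanSym, carlemanAntisym]
  rw [lap_mul (by fun_prop) hf, pd_mul (by fun_prop) (hf.differentiable (by simp) x), lap_w]
  simp [pd_w]
  ring

theorem carleman_estimate (hτ : 0 ≤ τ) (hf : ContDiff ℝ ∞ f) (hfc : HasCompactSupport f) :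
    4 * τ ^ 3 * ∫ x, ((x i + R) * (carlemanWeight R τ (x i) * f x)) ^ 2
      ≤ ∫ x, (carlemanWeight R τ (x i) * lap f x) ^ 2 := by
  set v := fun y => carlemanWeight R τ (y i) * f y
  have hw := contDiff_carlemanWeight R τ
  have hv : ContDiff ℝ ∞ v := by fun_prop
  have hvc : HasCompactSupport v := hfc.mul_left
  have hS : Continuous (carlemanSym i R τ v) := by unfold carlemanSym; fun_prop
  have hA : Continuous (carlemanAntisym i R τ v) := by unfold carlemanAntisym; fun_prop
  have hSc : HasCompactSupport (carlemanSym i R τ v) := hvc.lap.add hvc.mul_left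
  have hAc : HasCompactSupport (carlemanAntisym i R τ v) := ((hvc.pd i).mul_left.add hvc).mul_left
  have hτP : 0 ≤ τ * ∫ x, pd i v x ^ 2 := mul_nonneg hτ (integral_nonneg fun x => sq_nonneg _)
  calc 4 * τ ^ 3 * ∫ x, ((x i + R) * v x) ^ 2
      ≤ 2 * ∫ x, carlemanSym i R τ v x * carlemanAntisym i R τ v x := by
        rw [integral_carlemanSym_mul_carlemanAntisym i R τ hv hvc]
        linarith
    _ = ∫ x, 2 * (carlemanSym i R τ v x * carlemanAntisym i R τ v x) :=
        (integral_const_mul _ _).symm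
    _ ≤ ∫ x, (carlemanSym i R τ v x + carlemanAntisym i R τ v x) ^ 2 :=
        integral_mono ((continuous_const.mul (hS.mul hA)).integrable_of_hasCompactSupport
            hSc.mul_right.mul_left)
          (((hS.add hA).pow 2).integrable_of_hasCompactSupport ((hSc.add hAc).pow two_ne_zero))
          fun x => by
            nlinarith [sq_nonneg (carlemanSym i R τ v x), sq_nonneg (carlemanAntisym i R τ v x)]
    _ = ∫ x, (carlemanWeight R τ (x i) * lap f x) ^ 2 := by
        simp only [carlemanWeight_mul_lap i R τ hf, v]

end Carleman

theorem Continuous.eq_zero_of_integral_sq_eq_zero {X : Type*} [TopologicalSpace X]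
    [MeasurableSpace X] [OpensMeasurableSpace X] {μ : Measure X} [μ.IsOpenPosMeasure]
    [IsFiniteMeasureOnCompacts μ] {u : X → ℝ} (hu : Continuous u) (huc : HasCompactSupport u)
    (h : ∫ x, u x ^ 2 ∂μ = 0) : u = 0 := by
  funext x
  by_contra hx
  exact ((hu.pow 2).integral_pos_of_hasCompactSupport_nonneg_nonzero (huc.pow two_ne_zero)
    (fun x => sq_nonneg (u x)) (pow_ne_zero 2 hx)).ne' h

theorem eq_zero_of_lap_eq_mul {f V : (Fin n → ℝ) → ℝ} (hn : 0 < n) (hf : ContDiff ℝ ∞ f)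
    (hfc : HasCompactSupport f) (hV : Continuous V) (hfV : ∀ x, lap f x = V x * f x) :
    f = 0 := by
  set i : Fin n := ⟨0, hn⟩
  obtain ⟨r, hr⟩ := hfc.isCompact.exists_bound_of_continuousOn
    (continuous_apply (A := fun _ => ℝ) i).continuousOn
  obtain ⟨C, hC⟩ := hfc.isCompact.exists_bound_of_continuousOn hV.continuousOn
  set R := r + 1
  set τ := C ^ 2 + 1
  set w := fun x : Fin n → ℝ => carlemanWeight R τ (x i)
  have hcoord : ∀ x ∈ tsupport f, 1 ≤ x i + R := fun x hx => by
    have := hr x hx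
    rw [Real.norm_eq_abs] at this
    linarith [neg_abs_le (x i)]
  have hbound : ∀ x, (w x * lap f x) ^ 2 ≤ C ^ 2 * ((x i + R) * (w x * f x)) ^ 2 := fun x => by
    by_cases hx : x ∈ tsupport f
    · have hV2 : V x ^ 2 ≤ C ^ 2 := sq_le_sq' (abs_le.1 (hC x hx)).1 (abs_le.1 (hC x hx)).2
      have ha2 : 1 ≤ (x i + R) ^ 2 := by nlinarith [hcoord x hx]
      calc (w x * lap f x) ^ 2 = V x ^ 2 * (w x * f x) ^ 2 := by rw [hfV]; ring
        _ ≤ C ^ 2 * ((x i + R) ^ 2 * (w x * f x) ^ 2) := by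
          gcongr
          exact le_mul_of_one_le_left (sq_nonneg _) ha2
        _ = C ^ 2 * ((x i + R) * (w x * f x)) ^ 2 := by ring
    · simp [hfV, image_eq_zero_of_notMem_tsupport hx]
  have hw : Continuous w := (contDiff_carlemanWeight R τ).continuous.comp (continuous_apply i)
  have hupper : ∫ x, (w x * lap f x) ^ 2 ≤ C ^ 2 * ∫ x, ((x i + R) * (w x * f x)) ^ 2 := by
    rw [← integral_const_mul]
    exact integral_mono ((by fun_prop : Continuous fun x => (w x * lap f x) ^ 2)
        |>.integrable_of_hasCompactSupport (hfc.lap.mul_left.pow two_ne_zero))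
      ((by fun_prop : Continuous fun x => C ^ 2 * ((x i + R) * (w x * f x)) ^ 2)
        |>.integrable_of_hasCompactSupport ((hfc.mul_left.mul_left.pow two_ne_zero).mul_left))
      hbound
  have hτ : C ^ 2 < 4 * τ ^ 3 := by
    have hτ1 : 1 ≤ τ := by simp only [τ]; nlinarith [sq_nonneg C]
    linarith [le_self_pow₀ hτ1 three_ne_zero, show C ^ 2 < τ by simp only [τ]; linarith]
  have hzero : ∫ x, ((x i + R) * (w x * f x)) ^ 2 = 0 := by
    have : 0 ≤ ∫ x, ((x i + R) * (w x * f x)) ^ 2 := integral_nonneg fun x => sq_nonneg _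
    nlinarith [carleman_estimate i R τ (by positivity) hf hfc]
  have hu := Continuous.eq_zero_of_integral_sq_eq_zero (by fun_prop) hfc.mul_left.mul_left hzero
  funext x
  by_contra hfx
  have : (x i + R) * (w x * f x) = 0 := congrFun hu x
  exact mul_ne_zero (by linarith [hcoord x (subset_tsupport f hfx)])
    (mul_ne_zero (Real.exp_pos _).ne' hfx) this

theorem stmt_10_general {n : ℕ} (hn : 3 ≤ n)
    (γ : (Fin n → ℝ) → ℝ) (hγ : ContDiff ℝ (⊤ : ℕ∞) γ)
    (c : ℝ) (hc : 0 < c) (hγc : ∀ x, c ≤ γ x)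
    (q : (Fin n → ℝ) → ℝ)
    (hq : ∀ x, q x = lap (fun y => Real.sqrt (γ y)) x / Real.sqrt (γ x))
    (f : (Fin n → ℝ) → ℝ) (hf : ContDiff ℝ (⊤ : ℕ∞) f) (hfc : HasCompactSupport f)
    (hfeq : ∀ x, lap f x - 3 * q x * f x = 0) :
    f = 0 := by
  have hγpos : ∀ x, 0 < γ x := fun x => hc.trans_le (hγc x)
  have hsqrt : ContDiff ℝ ∞ fun y => Real.sqrt (γ y) := hγ.sqrt fun x => (hγpos x).ne'
  have hq_cont : Continuous q := by
    rw [funext hq]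
    exact (contDiff_lap hsqrt).continuous.div hsqrt.continuous
      fun x => (Real.sqrt_pos.2 (hγpos x)).ne'
  refine eq_zero_of_lap_eq_mul (V := fun x => 3 * q x) (by omega) hf hfc
    (continuous_const.mul hq_cont) fun x => ?_
  linarith [hfeq x]

theorem stmt_10 {n : ℕ} (hn : 3 ≤ n)
    (γ : (Fin n → ℝ) → ℝ) (hγ : ContDiff ℝ (⊤ : ℕ∞) γ)
    (c : ℝ) (hc : 0 < c) (hγc : ∀ x, c ≤ γ x)
    (hγ1 : HasCompactSupport (fun x => γ x - 1))
    (q : (Fin n → ℝ) → ℝ)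
    (hq : ∀ x, q x = lap (fun y => Real.sqrt (γ y)) x / Real.sqrt (γ x))
    (f : (Fin n → ℝ) → ℝ) (hf : ContDiff ℝ (⊤ : ℕ∞) f) (hfc : HasCompactSupport f)
    (hfeq : ∀ x, lap f x - 3 * q x * f x = 0) :
    f = 0 :=
  stmt_10_general hn γ hγ c hc hγc q hq f hf hfc hfeq
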